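/- With κ and r^w as above, for every y = Σ_w y_w τ_w ∈ ℝW one has ‖κ·y‖_q ≤ ‖κ‖²_q · ‖y‖_q; hence left multiplication by κ extends to a bounded operator on L²_q W. -/

import Mathlib

/-! Setup: `DihedralGroup 0` is the infinite dihedral group W with generators
s = sr 0 and t = sr 1; `dihLen` is the Coxeter word length; `dihProd a b w` is
the product of a's and b's along the reduced expression of w (so
`dihProd qs qt = q^w`, `dihProd rs rt = r^w`); `dihWord w` is the reduced word
of w (`true` = s, `false` = t).  H plays the role of L²_q W with Hecke basis
vectors τ_w; Rs, Rt are right multiplication by τ_s, τ_t and `Rop Rs Rt w` is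
right multiplication by τ_w.  For y = Σ_w y_w τ_w ∈ ℝW (finitely supported),
κ·y = Σ_w y_w κτ_w = Σ_w y_w (τ_w·κ) since κ is central, and
‖y‖_q² = Σ_w y_w² q^w. -/

def zmodToInt (n : ZMod 0) : ℤ := n

def dihLen : DihedralGroup 0 → ℕ
  | .r n => 2 * (zmodToInt n).natAbs
  | .sr k => if zmodToInt k ≤ 0 then 2 * (zmodToInt k).natAbs + 1
             else 2 * (zmodToInt k).natAbs - 1

def dihProd (a b : ℝ) : DihedralGroup 0 → ℝ
  | .r n => (a * b) ^ (zmodToInt n).natAbs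
  | .sr k => if zmodToInt k ≤ 0 then a ^ ((zmodToInt k).natAbs + 1) * b ^ (zmodToInt k).natAbs
             else a ^ ((zmodToInt k).natAbs - 1) * b ^ (zmodToInt k).natAbs

def altWord : Bool → ℕ → List Bool
  | _, 0 => []
  | b, n + 1 => b :: altWord (!b) n

def dihWord : DihedralGroup 0 → List Bool
  | .r n => if 0 ≤ zmodToInt n then altWord true (2 * (zmodToInt n).natAbs)
            else altWord false (2 * (zmodToInt n).natAbs)
  | .sr k => if zmodToInt k ≤ 0 then altWord true (2 * (zmodToInt k).natAbs + 1)
             else altWord false (2 * (zmodToInt k).natAbs - 1)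

def Rop {H : Type*} [NormedAddCommGroup H] [Module ℝ H]
    (Rs Rt : H →L[ℝ] H) (w : DihedralGroup 0) : H →L[ℝ] H :=
  (dihWord w).foldl (fun acc b => (if b then Rs else Rt).comp acc) 1

/-! Since `κ τ_w = q^w r^w κ = ⟪κ, τ_w⟫ κ`, left multiplication by κ agrees on the basis with
the rank-one operator `x ↦ ⟪κ, x⟫ κ`, whose norm is at most `‖κ‖²` by Cauchy–Schwarz; and for a
finitely supported `y` the vector `Σ_w y_w τ_w` has norm `(Σ_w y_w² q^w)^{1/2}` by orthogonality. -/

open scoped InnerProductSpace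

section OrthogonalFamily

variable {ι H : Type*} [DecidableEq ι] [NormedAddCommGroup H] [InnerProductSpace ℝ H]
  {τ : ι → H} {q : ι → ℝ}

theorem inner_tsum_smul_of_inner_eq_ite
    (hτ : ∀ w w', ⟪τ w, τ w'⟫_ℝ = if w = w' then q w else 0)
    {c : ι → ℝ} (hc : Summable fun w => c w • τ w) (v : ι) :
    ⟪∑' w, c w • τ w, τ v⟫_ℝ = c v * q v := by
  rw [real_inner_comm, ← innerSL_apply_apply ℝ (τ v), ContinuousLinearMap.map_tsum _ hc,
    tsum_eq_single v fun w hw => by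
      rw [innerSL_apply_apply, real_inner_smul_right, hτ, if_neg (Ne.symm hw), mul_zero],
    innerSL_apply_apply, real_inner_smul_right, hτ, if_pos rfl, mul_comm]

theorem norm_sq_finsuppSum_smul_of_inner_eq_ite
    (hτ : ∀ w w', ⟪τ w, τ w'⟫_ℝ = if w = w' then q w else 0) (y : ι →₀ ℝ) :
    ‖y.sum fun w c => c • τ w‖ ^ 2 = y.sum fun w c => c ^ 2 * q w := by
  rw [← real_inner_self_eq_norm_sq, Finsupp.sum, Finsupp.sum, sum_inner]
  refine Finset.sum_congr rfl fun w hw => ?_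
  simp only [inner_sum, real_inner_smul_left, real_inner_smul_right, hτ, mul_ite, mul_zero,
    Finset.sum_ite_eq, if_pos hw]
  ring

end OrthogonalFamily

theorem norm_innerSL_smulRight_apply_le {H : Type*} [NormedAddCommGroup H]
    [InnerProductSpace ℝ H] (κ x : H) :
    ‖(innerSL ℝ κ).smulRight κ x‖ ≤ ‖κ‖ ^ 2 * ‖x‖ := by
  rw [ContinuousLinearMap.smulRight_apply, innerSL_apply_apply, norm_smul, Real.norm_eq_abs]
  calc |⟪κ, x⟫_ℝ| * ‖κ‖ ≤ ‖κ‖ * ‖x‖ * ‖κ‖ := by gcongr; exact abs_real_inner_le_norm κ x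
    _ = ‖κ‖ ^ 2 * ‖x‖ := by ring

theorem kappa_bounded_general (qs qt rs rt : ℝ)
    {H : Type*} [NormedAddCommGroup H] [InnerProductSpace ℝ H]
    (τ : DihedralGroup 0 → H)
    (hinner : ∀ w w' : DihedralGroup 0,
      inner (𝕜 := ℝ) (τ w) (τ w') = if w = w' then dihProd qs qt w else 0)
    (Rs Rt : H →L[ℝ] H)
    (hsum : Summable fun w => dihProd rs rt w • τ w)
    (κ : H) (hκ : κ = ∑' w, dihProd rs rt w • τ w)
    (hκτ : ∀ w : DihedralGroup 0,
      Rop Rs Rt w κ = (dihProd qs qt w * dihProd rs rt w) • κ) :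
    (∀ y : DihedralGroup 0 →₀ ℝ,
      ‖y.sum fun w c => c • Rop Rs Rt w κ‖ ≤
        ‖κ‖ ^ 2 * Real.sqrt (y.sum fun w c => c ^ 2 * dihProd qs qt w)) ∧
    ∃ K : H →L[ℝ] H, ∀ w : DihedralGroup 0, K (τ w) = Rop Rs Rt w κ := by
  set K : H →L[ℝ] H := (innerSL ℝ κ).smulRight κ
  have hK : ∀ w, K (τ w) = Rop Rs Rt w κ := fun w => by
    have hκw : ⟪κ, τ w⟫_ℝ = dihProd rs rt w * dihProd qs qt w :=
      hκ ▸ inner_tsum_smul_of_inner_eq_ite hinner hsum w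
    rw [ContinuousLinearMap.smulRight_apply, innerSL_apply_apply, hκτ, hκw, mul_comm]
  refine ⟨fun y => ?_, K, hK⟩
  have hKy : (y.sum fun w c => c • Rop Rs Rt w κ) = K (y.sum fun w c => c • τ w) := by
    simp only [map_finsuppSum, map_smul, hK]
  rw [hKy, ← norm_sq_finsuppSum_smul_of_inner_eq_ite hinner, Real.sqrt_sq (norm_nonneg _)]
  exact norm_innerSL_smulRight_apply_le κ _

/-- For κ = Σ_w r^w τ_w with κτ_w = q^w r^w κ: for every y ∈ ℝW one has
‖κ·y‖_q ≤ ‖κ‖²_q ‖y‖_q, hence left multiplication by κ extends to a bounded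
operator on L²_q W. -/
theorem kappa_bounded (qs qt rs rt : ℝ) (hqs : 0 < qs) (hqt : 0 < qt)
    {H : Type*} [NormedAddCommGroup H] [InnerProductSpace ℝ H] [CompleteSpace H]
    (τ : DihedralGroup 0 → H)
    (hinner : ∀ w w' : DihedralGroup 0,
      inner (𝕜 := ℝ) (τ w) (τ w') = if w = w' then dihProd qs qt w else 0)
    (Rs Rt : H →L[ℝ] H)
    (hRs : ∀ w : DihedralGroup 0,
      Rs (τ w) = if dihLen (w * DihedralGroup.sr 0) > dihLen w
        then τ (w * DihedralGroup.sr 0)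
        else (qs - 1) • τ w + qs • τ (w * DihedralGroup.sr 0))
    (hRt : ∀ w : DihedralGroup 0,
      Rt (τ w) = if dihLen (w * DihedralGroup.sr 1) > dihLen w
        then τ (w * DihedralGroup.sr 1)
        else (qt - 1) • τ w + qt • τ (w * DihedralGroup.sr 1))
    (hsum : Summable fun w => dihProd rs rt w • τ w)
    (κ : H) (hκ : κ = ∑' w, dihProd rs rt w • τ w)
    (hκτ : ∀ w : DihedralGroup 0,
      Rop Rs Rt w κ = (dihProd qs qt w * dihProd rs rt w) • κ) :
    (∀ y : DihedralGroup 0 →₀ ℝ,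
      ‖y.sum fun w c => c • Rop Rs Rt w κ‖ ≤
        ‖κ‖ ^ 2 * Real.sqrt (y.sum fun w c => c ^ 2 * dihProd qs qt w)) ∧
    ∃ K : H →L[ℝ] H, ∀ w : DihedralGroup 0, K (τ w) = Rop Rs Rt w κ :=
  kappa_bounded_general qs qt rs rt τ hinner Rs Rt hsum κ hκ hκτ
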